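/- If strong convexity holds blockwise — i.e., F : ℝ^N → ℝ is continuously differentiable, convex, and for each i the function x_i ↦ F(x_1,…,x_n) (other blocks fixed) attains its minimum over the closed convex set X_i uniquely — then any limit point x̄ of the cyclic block coordinate descent sequence satisfies x̄_i ∈ argmin_{x_i ∈ X_i} F(x̄_1,…,x̄_{i−1}, x_i, x̄_{i+1},…,x̄_n) for every i. -/
import Mathlib


/-- If F is continuously differentiable and convex, and each blockwise
minimization over the closed convex set X_i (other blocks fixed) has a unique
minimizer, then any limit point x̄ of the cyclic BCD sequence (along a subsequence
with consecutive differences tending to zero) satisfies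
x̄_i ∈ argmin_{x_i ∈ X_i} F(x̄_1,…,x_i,…,x̄_n) for every i. -/
theorem stmt19 {n : ℕ} {N : Fin n → ℕ}
    (F : (∀ i : Fin n, (Fin (N i) → ℝ)) → ℝ)
    (hFconv : ConvexOn ℝ Set.univ F) (hFdiff : Differentiable ℝ F)
    (hFgradcont : Continuous fun x => fderiv ℝ F x)
    (X : ∀ i : Fin n, Set (Fin (N i) → ℝ))
    (hXne : ∀ i, (X i).Nonempty) (hXcl : ∀ i, IsClosed (X i))
    (hXcv : ∀ i, Convex ℝ (X i))
    -- unique blockwise minimizers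
    (huniq : ∀ (i : Fin n) (z : ∀ j : Fin n, (Fin (N j) → ℝ)),
      ∃! yi : Fin (N i) → ℝ, yi ∈ X i ∧
        ∀ wi ∈ X i, F (Function.update z i yi) ≤ F (Function.update z i wi))
    (x : ℕ → ∀ i : Fin n, (Fin (N i) → ℝ))
    (hx0 : ∀ i, x 0 i ∈ X i)
    -- cyclic BCD sweep
    (hmin : ∀ v : ℕ, ∀ i : Fin n,
      x (v + 1) i ∈ X i ∧
      ∀ yi ∈ X i,
        F (Function.update (fun j => if (j : ℕ) < (i : ℕ) then x (v + 1) j else x v j)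
            i (x (v + 1) i)) ≤
        F (Function.update (fun j => if (j : ℕ) < (i : ℕ) then x (v + 1) j else x v j)
            i yi))
    (xbar : ∀ i : Fin n, (Fin (N i) → ℝ))
    (φ : ℕ → ℕ) (hφ : StrictMono φ)
    (hlim : Filter.Tendsto (fun k => x (φ k)) Filter.atTop (nhds xbar))
    (hdiffzero : Filter.Tendsto (fun k => x (φ k + 1) - x (φ k)) Filter.atTop (nhds 0)) :
    ∀ i : Fin n, xbar i ∈ X i ∧
      ∀ yi ∈ X i, F xbar ≤ F (Function.update xbar i yi) := by
  have hcontF : Continuous F := hFdiff.continuous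
  have hlim1 : Filter.Tendsto (fun k => x (φ k + 1)) Filter.atTop (nhds xbar) := by
    have := hdiffzero.add hlim
    simpa using this
  have hcomp : ∀ j, Filter.Tendsto (fun k => x (φ k) j) Filter.atTop (nhds (xbar j)) :=
    fun j => tendsto_pi_nhds.mp hlim j
  have hcomp1 : ∀ j, Filter.Tendsto (fun k => x (φ k + 1) j) Filter.atTop (nhds (xbar j)) :=
    fun j => tendsto_pi_nhds.mp hlim1 j
  intro i
  refine ⟨(hXcl i).mem_of_tendsto (hcomp1 i)
      (Filter.Eventually.of_forall fun k => (hmin (φ k) i).1), ?_⟩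
  intro yi hyi
  set b : ℕ → ∀ j : Fin n, (Fin (N j) → ℝ) := fun k =>
    Function.update (fun j => if (j : ℕ) < (i : ℕ) then x (φ k + 1) j else x (φ k) j)
      i (x (φ k + 1) i) with hb_def
  set c : ℕ → ∀ j : Fin n, (Fin (N j) → ℝ) := fun k =>
    Function.update (fun j => if (j : ℕ) < (i : ℕ) then x (φ k + 1) j else x (φ k) j)
      i yi with hc_def
  have hb : Filter.Tendsto b Filter.atTop (nhds xbar) := by
    rw [tendsto_pi_nhds]
    intro j
    by_cases hj : j = i
    · subst hj
      simpa [hb_def, Function.update_self] using hcomp1 j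
    · by_cases h : (j : ℕ) < (i : ℕ)
      · simpa [hb_def, Function.update_of_ne hj, show j < i from h] using hcomp1 j
      · simpa [hb_def, Function.update_of_ne hj, show ¬ j < i from h] using hcomp j
  have hc : Filter.Tendsto c Filter.atTop (nhds (Function.update xbar i yi)) := by
    rw [tendsto_pi_nhds]
    intro j
    by_cases hj : j = i
    · subst hj
      simpa [hc_def, Function.update_self] using tendsto_const_nhds
    · by_cases h : (j : ℕ) < (i : ℕ)
      · simpa [hc_def, Function.update_of_ne hj, show j < i from h] using hcomp1 j
      · simpa [hc_def, Function.update_of_ne hj, show ¬ j < i from h] using hcomp j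
  exact le_of_tendsto_of_tendsto' (hcontF.continuousAt.tendsto.comp hb)
    (hcontF.continuousAt.tendsto.comp hc) (fun k => (hmin (φ k) i).2 yi hyi)
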